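/- Suppose a predicate φ over the states of a transition system satisfies, for some k ≥ 1, the base condition (every execution of length k from an initial state satisfies φ at every step) and the inductive condition (for every sequence of k+1 consecutive transitions, if φ holds at the first k states then φ holds at the (k+1)-st). Then φ holds at every state of every infinite execution starting from an initial state. -/
import Mathlib


/-- Soundness of k-induction: if φ satisfies the base and inductive conditions for
some k ≥ 1, then φ holds at every state of every execution from an initial state. -/
theorem k_induction_sound {σ : Type*} (I : σ → Prop) (T : σ → σ → Prop)
    (φ : σ → Prop) (k : ℕ) (hk : 1 ≤ k)
    -- base condition
    (hbase : ∀ x : ℕ → σ, I (x 0) → (∀ i, i < k - 1 → T (x i) (x (i + 1))) →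
      ∀ i, i < k → φ (x i))
    -- inductive condition
    (hind : ∀ x : ℕ → σ, ∀ n : ℕ,
      (∀ i, n ≤ i → i < n + k → T (x i) (x (i + 1))) →
      (∀ i, n ≤ i → i < n + k → φ (x i)) →
      φ (x (n + k))) :
    ∀ x : ℕ → σ, I (x 0) → (∀ i, T (x i) (x (i + 1))) → ∀ i, φ (x i) := by
  intro x hI hT i
  induction i using Nat.strong_induction_on with
  | _ i ih =>
    by_cases h : i < k
    · exact hbase x hI (fun j _ => hT j) i h
    · push_neg at h
      have hik : i - k + k = i := Nat.sub_add_cancel h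
      have := hind x (i - k) (fun j _ _ => hT j)
        (fun j _ hj => ih j (by omega))
      rwa [hik] at this
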